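/- In the setting of the occupational estimate, assume additionally that there is γ : (0,∞) → (0,∞) such that F(z,μ) − c(μ) ≥ γ(r) for every μ ∈ P(ℝⁿ) whenever dist(z,𝒜) > r, and that the minimizer y* is Lipschitz with constant χ' > 0. Then for every r > 0 there exists T₀ > 0, depending only on r, χ', γ(r), γ(r/2), C_F and dist(x,𝒜) (and nonincreasing in none of these beyond that dependence), such that for every horizon T ≥ T₀ one has dist(y*(t), 𝒜) ≤ r for all t ∈ [T₀ − r/(2χ'), T]. -/

import Mathlib

/-!
If `y*` is more than `r` away from `𝒜` at time `t`, the Lipschitz bound keeps it more than `r/2`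
away during `[t - r/(2χ'), t]`, where it therefore pays at least `γ(r/2) · r/(2χ')` of excess
action `∫ (|ẏ|²/2 + F - c)`. Conversely, comparing `y*` with the curve that follows `y*` up to a
time `σ`, then walks straight to a nearby point of `𝒜` and rests there, bounds the excess action
of `y*` after `σ` by the cost of that walk. From `σ = 0` this bounds the total excess action, so
for large `t` the curve comes `δ`-close to `𝒜` at some `σ ≤ t - r/(2χ')`; from there the walk
costs `O(δ)`, which for small `δ` contradicts the lower bound.
-/

open MeasureTheory Set Filter Metric

noncomputable section

abbrev En (n : ℕ) : Type := EuclideanSpace ℝ (Fin n)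
abbrev Pn (n : ℕ) : Type := MeasureTheory.ProbabilityMeasure (En n)

/-- Action functional on the time interval `[t,T]`. -/
def action {n : ℕ} (F : En n → Pn n → ℝ) (m : ℝ → Pn n) (t T : ℝ) (y : ℝ → En n) : ℝ :=
  ∫ s in t..T, (‖deriv y s‖ ^ 2 / 2 + F (y s) (m s))

/-- Admissible curves on `[t,T]` starting at `x`. -/
def Adm {n : ℕ} (t T : ℝ) (x : En n) (y : ℝ → En n) : Prop :=
  (∃ L : NNReal, LipschitzOnWith L y (Set.Icc t T)) ∧ y t = x

/-- `cmin F μ` is the infimum of `F (·, μ)`. -/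
def cmin {n : ℕ} (F : En n → Pn n → ℝ) (μ : Pn n) : ℝ := ⨅ z : En n, F z μ

open Topology TopologicalSpace
open scoped NNReal

section SeparatelyContinuous

variable {X Y : Type*} [TopologicalSpace X] [MetrizableSpace X] [SecondCountableTopology X]
  [MeasurableSpace X] [BorelSpace X] [TopologicalSpace Y]

theorem measurable_of_separatelyContinuous {α β : Type*} [TopologicalSpace α] [MeasurableSpace α]
    [OpensMeasurableSpace α] [TopologicalSpace β] [PseudoMetrizableSpace β] [MeasurableSpace β]
    [BorelSpace β] {F : X → Y → β} (hFx : ∀ y, Continuous (F · y)) (hFy : ∀ x, Continuous (F x))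
    {u : α → X} {v : α → Y} (hu : Measurable u) (hv : Continuous v) :
    Measurable fun s => F (u s) (v s) :=
  (measurable_uncurry_of_continuous_of_measurable (u := fun x s => F x (v s))
    (fun s => hFx (v s)) fun x => ((hFy x).comp hv).measurable).comp (hu.prodMk measurable_id)

theorem intervalIntegrable_of_separatelyContinuous {F : X → Y → ℝ}
    (hFx : ∀ y, Continuous (F · y)) (hFy : ∀ x, Continuous (F x)) {C : ℝ}
    (hC : ∀ x y, |F x y| ≤ C) {u : ℝ → X} {v : ℝ → Y} {a b : ℝ} (hab : a ≤ b)
    (hu : ContinuousOn u (Icc a b)) (hv : ContinuousOn v (Icc a b)) :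
    IntervalIntegrable (fun s => F (u s) (v s)) volume a b := by
  set clamp : ℝ → ℝ := fun s => projIcc a b hab s
  have hclamp : Continuous clamp := continuous_subtype_val.comp continuous_projIcc
  have hclamp_mem : ∀ s, clamp s ∈ Icc a b := fun s => (projIcc a b hab s).2
  have hmeas : Measurable fun s => F (u (clamp s)) (v (clamp s)) :=
    measurable_of_separatelyContinuous hFx hFy
      (hu.comp_continuous hclamp hclamp_mem).measurable (hv.comp_continuous hclamp hclamp_mem)
  rw [intervalIntegrable_iff_integrableOn_Icc_of_le hab]
  refine IntegrableOn.congr_fun (Integrable.of_bound hmeas.aestronglyMeasurable C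
    (Eventually.of_forall fun s => hC _ _)) (fun s hs => ?_) measurableSet_Icc
  simp only [clamp, projIcc_of_mem hab hs]

end SeparatelyContinuous

theorem intervalIntegrable_norm_deriv_sq {E : Type*} [NormedAddCommGroup E] [NormedSpace ℝ E]
    [CompleteSpace E] {u : ℝ → E} {L : ℝ≥0} {a b : ℝ} (hab : a ≤ b)
    (hu : LipschitzOnWith L u (Icc a b)) :
    IntervalIntegrable (fun s => ‖deriv u s‖ ^ 2) volume a b := by
  rw [intervalIntegrable_iff_integrableOn_Ioo_of_le hab]
  refine Integrable.of_bound
    ((stronglyMeasurable_deriv u).norm.measurable.pow_const 2).aestronglyMeasurable ((L : ℝ) ^ 2)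
    ((ae_restrict_mem measurableSet_Ioo).mono fun s hs => ?_)
  have hderiv : ‖deriv u s‖ ≤ L := norm_deriv_le_of_lipschitzOn (Icc_mem_nhds hs.1 hs.2) hu
  rw [Real.norm_eq_abs, abs_of_nonneg (by positivity)]
  gcongr

theorem IntervalIntegrable.mono_set_of_le {E : Type*} [NormedAddCommGroup E] {f : ℝ → E}
    {μ : Measure ℝ} {a b c d : ℝ} (hf : IntervalIntegrable f μ a b) (hac : a ≤ c) (hcd : c ≤ d)
    (hdb : d ≤ b) : IntervalIntegrable f μ c d :=
  hf.mono_set (uIcc_subset_uIcc (mem_uIcc_of_le hac (hcd.trans hdb))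
    (mem_uIcc_of_le (hac.trans hcd) hdb))

theorem mul_le_integral_of_le_on_Ioo {g : ℝ → ℝ} {a b α β c : ℝ}
    (hg : IntervalIntegrable g volume a b) (hg0 : ∀ s ∈ Ioc a b, 0 ≤ g s) (haα : a ≤ α)
    (hαβ : α ≤ β) (hβb : β ≤ b) (hc : ∀ s ∈ Ioo α β, c ≤ g s) :
    c * (β - α) ≤ ∫ s in a..b, g s :=
  calc c * (β - α) = ∫ _ in α..β, c := by simp [mul_comm]
    _ ≤ ∫ s in α..β, g s := intervalIntegral.integral_mono_on_of_le_Ioo hαβ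
        intervalIntegrable_const (hg.mono_set_of_le haα hαβ hβb) hc
    _ ≤ ∫ s in a..b, g s := intervalIntegral.integral_mono_interval haα hαβ hβb
        (ae_restrict_of_forall_mem measurableSet_Ioc hg0) hg

theorem LipschitzOnWith.infDist_le_add {α β : Type*} [PseudoMetricSpace α] [PseudoMetricSpace β]
    {y : β → α} {K : ℝ≥0} {S : Set β} (hy : LipschitzOnWith K y S) {s t : β} (hs : s ∈ S)
    (ht : t ∈ S) (A : Set α) : infDist (y t) A ≤ infDist (y s) A + K * dist t s :=
  infDist_le_infDist_add_dist.trans (by gcongr; exact hy.dist_le_mul t ht s hs)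

theorem half_lt_infDist_of_lipschitzOnWith {α : Type*} [PseudoMetricSpace α] {y : ℝ → α}
    {χ r T t s : ℝ} {A : Set α} (hχ : 0 < χ)
    (hy : LipschitzOnWith (Real.toNNReal χ) y (Icc 0 T)) (hr : r < infDist (y t) A)
    (htT : t ≤ T) (hs0 : 0 ≤ s) (hs : s ∈ Ioo (t - r / (2 * χ)) t) :
    r / 2 < infDist (y s) A := by
  have h := hy.infDist_le_add (s := s) (t := t) ⟨hs0, by linarith [hs.2]⟩
    ⟨by linarith [hs.2], htT⟩ A
  rw [Real.coe_toNNReal _ hχ.le, Real.dist_eq, abs_of_pos (by linarith [hs.2])] at h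
  have : χ * (t - s) < χ * (r / (2 * χ)) := by gcongr; linarith [hs.1]
  have : χ * (r / (2 * χ)) = r / 2 := by field_simp
  linarith

section Detour

variable {E : Type*} [NormedAddCommGroup E] [NormedSpace ℝ E]

/-- Follows `w` up to time `σ`, then runs at constant speed to `a`, arriving at time `σ + τ`. -/
def detour (w : ℝ → E) (σ τ : ℝ) (a : E) (s : ℝ) : E :=
  w (min s σ) + max 0 (min ((s - σ) / τ) 1) • (a - w σ)

variable {w : ℝ → E} {σ τ s : ℝ} {a : E}

theorem lipschitzWith_ramp_smul (hτ : 0 < τ) {v : E} {K : ℝ≥0} (hv : ‖v‖ ≤ K * τ) :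
    LipschitzWith K fun s : ℝ => max 0 (min ((s - σ) / τ) 1) • v := by
  have hramp : LipschitzWith (Real.toNNReal τ⁻¹) fun s : ℝ => max 0 (min ((s - σ) / τ) 1) := by
    refine (LipschitzWith.of_dist_le_mul fun s t => ?_).min_const 1 |>.const_max 0
    rw [Real.dist_eq, Real.dist_eq, ← sub_div, sub_sub_sub_cancel_right, abs_div,
      abs_of_pos hτ, Real.coe_toNNReal _ (inv_nonneg.2 hτ.le), div_eq_inv_mul]
  refine LipschitzWith.of_dist_le_mul fun s t => ?_
  rw [dist_eq_norm, ← sub_smul, norm_smul, ← dist_eq_norm]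
  calc dist _ _ * ‖v‖ ≤ (τ⁻¹ * dist s t) * (K * τ) := by
        refine mul_le_mul ?_ hv (norm_nonneg v) (by positivity)
        simpa [Real.coe_toNNReal _ (inv_nonneg.2 hτ.le)] using hramp.dist_le_mul s t
    _ = K * dist s t := by field_simp

theorem detour_of_le (hτ : 0 ≤ τ) (hs : s ≤ σ) : detour w σ τ a s = w s := by
  have : (s - σ) / τ ≤ 0 := div_nonpos_of_nonpos_of_nonneg (by linarith) hτ
  simp [detour, min_eq_left hs, max_eq_left ((min_le_left _ _).trans this)]

theorem detour_of_ge (hτ : 0 < τ) (hs : σ + τ ≤ s) : detour w σ τ a s = a := by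
  have : 1 ≤ (s - σ) / τ := (one_le_div hτ).2 (by linarith)
  simp [detour, min_eq_right (show σ ≤ s by linarith), min_eq_right this]

theorem detour_eq_add (hs : σ ≤ s) :
    detour w σ τ a s = w σ + max 0 (min ((s - σ) / τ) 1) • (a - w σ) := by
  simp [detour, min_eq_right hs]

theorem detour_eventuallyEq_of_lt (hτ : 0 ≤ τ) (hs : s < σ) : detour w σ τ a =ᶠ[𝓝 s] w :=
  eventually_of_mem (Iio_mem_nhds hs) fun _ h => detour_of_le hτ (le_of_lt h)

theorem detour_eventuallyEq_of_gt (hτ : 0 < τ) (hs : σ + τ < s) :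
    detour w σ τ a =ᶠ[𝓝 s] fun _ => a :=
  eventually_of_mem (Ioi_mem_nhds hs) fun _ h => detour_of_ge hτ (le_of_lt h)

theorem norm_deriv_detour_le (hτ : 0 < τ) {K : ℝ≥0} (hK : ‖a - w σ‖ ≤ K * τ) (hs : σ < s) :
    ‖deriv (detour w σ τ a) s‖ ≤ K := by
  have heq : detour w σ τ a =ᶠ[𝓝 s] fun s => w σ + max 0 (min ((s - σ) / τ) 1) • (a - w σ) :=
    eventually_of_mem (Ioi_mem_nhds hs) fun _ h => detour_eq_add (le_of_lt h)
  rw [heq.deriv_eq, deriv_const_add]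
  exact norm_deriv_le_of_lipschitz (lipschitzWith_ramp_smul hτ hK)

theorem lipschitzOnWith_detour {L K : ℝ≥0} {t T : ℝ} (hw : LipschitzOnWith L w (Icc t T))
    (hσ : σ ∈ Icc t T) (hτ : 0 < τ) (hK : ‖a - w σ‖ ≤ K * τ) :
    LipschitzOnWith (L + K) (detour w σ τ a) (Icc t T) := by
  have hhead : LipschitzOnWith L (fun s => w (min s σ)) (Icc t T) := by
    simpa [Function.comp_def] using hw.comp (LipschitzWith.id.min_const σ).lipschitzOnWith
      fun s hs => ⟨le_min hs.1 hσ.1, (min_le_right _ _).trans hσ.2⟩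
  exact hhead.add (lipschitzWith_ramp_smul hτ hK).lipschitzOnWith

end Detour

section ExcessLagrangian

variable {n : ℕ} {F : En n → Pn n → ℝ} {m : ℝ → Pn n}

theorem cmin_le {M : ℝ} (hM : ∀ x μ, |F x μ| ≤ M) (z : En n) (μ : Pn n) : cmin F μ ≤ F z μ :=
  ciInf_le ⟨-M, by rintro _ ⟨z', rfl⟩; exact neg_le_of_abs_le (hM z' μ)⟩ z

theorem continuous_cmin_of_forall_eq {a : En n}
    (hFa : Continuous (F a)) (ha : ∀ μ, F a μ = cmin F μ) : Continuous (cmin F) := by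
  rwa [show cmin F = F a from funext fun μ => (ha μ).symm]

theorem nonneg_of_forall_sub_cmin_le {C : ℝ} {a : En n}
    (ha : ∀ μ, F a μ = cmin F μ) (hC : ∀ μ, F a μ - cmin F μ ≤ C) : 0 ≤ C := by
  let μ : Pn n := ⟨Measure.dirac a, inferInstance⟩
  linarith [hC μ, ha μ]

def excessLagrangian (F : En n → Pn n → ℝ) (m : ℝ → Pn n) (y : ℝ → En n) (s : ℝ) : ℝ :=
  ‖deriv y s‖ ^ 2 / 2 + (F (y s) (m s) - cmin F (m s))

theorem sub_cmin_le_excessLagrangian (y : ℝ → En n) (s : ℝ) :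
    F (y s) (m s) - cmin F (m s) ≤ excessLagrangian F m y s :=
  le_add_of_nonneg_left (by positivity)

theorem excessLagrangian_nonneg {M : ℝ} (hM : ∀ x μ, |F x μ| ≤ M) (y : ℝ → En n) (s : ℝ) :
    0 ≤ excessLagrangian F m y s :=
  (sub_nonneg.2 (cmin_le hM _ _)).trans (sub_cmin_le_excessLagrangian y s)

theorem excessLagrangian_congr {y₁ y₂ : ℝ → En n} {s : ℝ} (h : y₁ =ᶠ[𝓝 s] y₂) :
    excessLagrangian F m y₁ s = excessLagrangian F m y₂ s := by
  simp only [excessLagrangian, h.deriv_eq, h.eq_of_nhds]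

theorem intervalIntegrable_excessLagrangian {M : ℝ} (hM : ∀ x μ, |F x μ| ≤ M)
    (hFx : ∀ μ, Continuous fun x => F x μ) (hFm : ∀ x, Continuous fun μ => F x μ)
    (hc : Continuous (cmin F)) {a b : ℝ} (hab : a ≤ b) (hm : ContinuousOn m (Icc a b))
    {y : ℝ → En n} {L : ℝ≥0} (hy : LipschitzOnWith L y (Icc a b)) :
    IntervalIntegrable (excessLagrangian F m y) volume a b :=
  ((intervalIntegrable_norm_deriv_sq hab hy).div_const 2).add
    ((intervalIntegrable_of_separatelyContinuous hFx hFm hM hab hy.continuousOn hm).sub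
      ((hc.comp_continuousOn hm).intervalIntegrable_of_Icc hab))

theorem action_eq_integral_excessLagrangian_add {y : ℝ → En n} {t T : ℝ}
    (hy : IntervalIntegrable (excessLagrangian F m y) volume t T)
    (hc : IntervalIntegrable (fun s => cmin F (m s)) volume t T) :
    action F m t T y = (∫ s in t..T, excessLagrangian F m y s) + ∫ s in t..T, cmin F (m s) := by
  rw [← intervalIntegral.integral_add hy hc, action]
  congr 1 with s
  simp only [excessLagrangian]
  ring

variable {w : ℝ → En n} {σ τ : ℝ} {a : En n}

theorem integral_excessLagrangian_detour_of_le (hτ : 0 ≤ τ) {t : ℝ} (htσ : t ≤ σ) :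
    ∫ s in t..σ, excessLagrangian F m (detour w σ τ a) s =
      ∫ s in t..σ, excessLagrangian F m w s := by
  refine intervalIntegral.integral_congr_ae (eventually_of_mem
    (compl_mem_ae_iff.2 (measure_singleton σ)) fun s hsσ hs => ?_)
  rw [uIoc_of_le htσ] at hs
  exact excessLagrangian_congr (detour_eventuallyEq_of_lt hτ (hs.2.lt_of_ne hsσ))

theorem integral_excessLagrangian_detour_le {C_F : ℝ}
    (hCF : ∀ z μ, F z μ - cmin F μ ≤ C_F) (ha : ∀ μ, F a μ = cmin F μ) (hτ : 0 < τ)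
    {K : ℝ≥0} (hK : ‖a - w σ‖ ≤ K * τ) {T : ℝ} (hT : σ + τ ≤ T)
    (hint : IntervalIntegrable (excessLagrangian F m (detour w σ τ a)) volume σ T) :
    ∫ s in σ..T, excessLagrangian F m (detour w σ τ a) s ≤ (K ^ 2 / 2 + C_F) * τ := by
  have hmid : ∫ s in σ..σ + τ, excessLagrangian F m (detour w σ τ a) s ≤ (K ^ 2 / 2 + C_F) * τ :=
    calc _ ≤ ∫ _ in σ..σ + τ, ((K : ℝ) ^ 2 / 2 + C_F) :=
          intervalIntegral.integral_mono_on_of_le_Ioo (by linarith)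
            (hint.mono_set_of_le le_rfl (by linarith) hT) intervalIntegrable_const fun s hs => by
              have hderiv := norm_deriv_detour_le hτ hK hs.1
              have hF := hCF (detour w σ τ a s) (m s)
              simp only [excessLagrangian]
              gcongr
      _ = _ := by simp only [intervalIntegral.integral_const, smul_eq_mul]; ring
  have htail : ∫ s in σ + τ..T, excessLagrangian F m (detour w σ τ a) s = 0 := by
    rw [← intervalIntegral.integral_zero]
    refine intervalIntegral.integral_congr_ae (Eventually.of_forall fun s hs => ?_)
    rw [uIoc_of_le hT] at hs
    rw [excessLagrangian_congr (detour_eventuallyEq_of_gt hτ hs.1)]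
    simp [excessLagrangian, ha]
  rw [← intervalIntegral.integral_add_adjacent_intervals
    (hint.mono_set_of_le le_rfl (by linarith) hT) (hint.mono_set_of_le (by linarith) hT le_rfl),
    htail, add_zero]
  exact hmid

end ExcessLagrangian

section Minimizer

variable {n : ℕ} {F : En n → Pn n → ℝ} {M C_F : ℝ} {𝒜 : Set (En n)} {m : ℝ → Pn n}
  {y : ℝ → En n}

theorem integral_excessLagrangian_le_of_isMinimizer (hM : ∀ x μ, |F x μ| ≤ M)
    (hFx : ∀ μ, Continuous fun x => F x μ) (hFm : ∀ x, Continuous fun μ => F x μ)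
    (hc : Continuous (cmin F)) (hCF : ∀ z μ, F z μ - cmin F μ ≤ C_F) {T σ τ : ℝ} (hσ : 0 ≤ σ)
    (hτ : 0 < τ) (hστ : σ + τ ≤ T) (hm : ContinuousOn m (Icc 0 T)) {x : En n} {L : ℝ≥0}
    (hy : LipschitzOnWith L y (Icc 0 T)) (hy0 : y 0 = x)
    (hmin : ∀ y', Adm 0 T x y' → action F m 0 T y ≤ action F m 0 T y') {a : En n}
    (ha : ∀ μ, F a μ = cmin F μ) {K : ℝ≥0} (hK : ‖a - y σ‖ ≤ K * τ) :
    ∫ s in σ..T, excessLagrangian F m y s ≤ (K ^ 2 / 2 + C_F) * τ := by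
  have hσT : σ ≤ T := by linarith
  have hT : 0 ≤ T := hσ.trans hσT
  have hz := lipschitzOnWith_detour hy ⟨hσ, hσT⟩ hτ hK
  have hadm : Adm 0 T x (detour y σ τ a) := ⟨⟨_, hz⟩, by rw [detour_of_le hτ.le hσ, hy0]⟩
  have hIy := intervalIntegrable_excessLagrangian hM hFx hFm hc hT hm hy
  have hIz := intervalIntegrable_excessLagrangian hM hFx hFm hc hT hm hz
  have hIc : IntervalIntegrable (fun s => cmin F (m s)) volume 0 T :=
    (hc.comp_continuousOn hm).intervalIntegrable_of_Icc hT
  have hcompare := hmin _ hadm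
  rw [action_eq_integral_excessLagrangian_add hIy hIc,
    action_eq_integral_excessLagrangian_add hIz hIc, add_le_add_iff_right,
    ← intervalIntegral.integral_add_adjacent_intervals (hIy.mono_set_of_le le_rfl hσ hσT)
      (hIy.mono_set_of_le hσ hσT le_rfl),
    ← intervalIntegral.integral_add_adjacent_intervals (hIz.mono_set_of_le le_rfl hσ hσT)
      (hIz.mono_set_of_le hσ hσT le_rfl),
    integral_excessLagrangian_detour_of_le hτ.le hσ, add_le_add_iff_left] at hcompare
  exact hcompare.trans (integral_excessLagrangian_detour_le hCF ha hτ hK hστ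
    (hIz.mono_set_of_le hσ hσT le_rfl))

theorem exists_infDist_le_of_integral_excessLagrangian_le (hM : ∀ x μ, |F x μ| ≤ M) {δ g : ℝ}
    (hg : ∀ z μ, δ < infDist z 𝒜 → g ≤ F z μ - cmin F μ) (hg0 : 0 < g) {T E t : ℝ}
    (hint : IntervalIntegrable (excessLagrangian F m y) volume 0 T)
    (hbudget : ∫ s in 0..T, excessLagrangian F m y s ≤ E) (ht0 : 0 ≤ t) (hEt : E / g < t)
    (htT : t ≤ T) : ∃ σ ∈ Icc 0 t, infDist (y σ) 𝒜 ≤ δ := by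
  by_contra! hfar
  have hlower := mul_le_integral_of_le_on_Ioo hint (fun s _ => excessLagrangian_nonneg hM y s)
    le_rfl ht0 htT fun s hs =>
      (hg _ _ (hfar s (Ioo_subset_Icc_self hs))).trans (sub_cmin_le_excessLagrangian y s)
  have : E < g * t := (div_lt_iff₀' hg0).1 hEt
  linarith

theorem infDist_le_of_infDist_le_before (hM : ∀ x μ, |F x μ| ≤ M)
    (hFx : ∀ μ, Continuous fun x => F x μ) (hFm : ∀ x, Continuous fun μ => F x μ)
    (hc : Continuous (cmin F)) (hCF : ∀ z μ, F z μ - cmin F μ ≤ C_F) (hA_ne : 𝒜.Nonempty)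
    (hA_min : ∀ a ∈ 𝒜, ∀ μ, F a μ = cmin F μ) {r χ g δ : ℝ} (hr : 0 < r) (hχ : 0 < χ)
    (hg : ∀ z μ, r / 2 < infDist z 𝒜 → g ≤ F z μ - cmin F μ) (hδ : 0 < δ)
    (hδℓ : δ ≤ r / (2 * χ)) (hδg : (2 + C_F) * δ < g * (r / (2 * χ))) {T : ℝ}
    (hm : ContinuousOn m (Icc 0 T)) {x : En n}
    (hy : LipschitzOnWith (Real.toNNReal χ) y (Icc 0 T)) (hy0 : y 0 = x)
    (hmin : ∀ y', Adm 0 T x y' → action F m 0 T y ≤ action F m 0 T y') {σ t : ℝ}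
    (hσ0 : 0 ≤ σ) (hσt : σ ≤ t - r / (2 * χ)) (htT : t ≤ T) (hσδ : infDist (y σ) 𝒜 ≤ δ) :
    infDist (y t) 𝒜 ≤ r := by
  by_contra! hfar
  have hℓ : 0 < r / (2 * χ) := by positivity
  obtain ⟨a, ha, hya⟩ := (infDist_lt_iff hA_ne).1 (show infDist (y σ) 𝒜 < 2 * δ by linarith)
  have hupper : ∫ s in σ..T, excessLagrangian F m y s ≤ (2 + C_F) * δ := by
    have := integral_excessLagrangian_le_of_isMinimizer hM hFx hFm hc hCF hσ0 hδ
      (by linarith) hm hy hy0 hmin (hA_min a ha) (K := 2)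
      (by rw [← dist_eq_norm']; push_cast; linarith)
    norm_num at this
    exact this
  have hlower : g * (t - (t - r / (2 * χ))) ≤ ∫ s in σ..T, excessLagrangian F m y s :=
    mul_le_integral_of_le_on_Ioo
      ((intervalIntegrable_excessLagrangian hM hFx hFm hc (by linarith) hm hy).mono_set_of_le
        hσ0 (by linarith) le_rfl)
      (fun s _ => excessLagrangian_nonneg hM y s) hσt (by linarith) htT fun s hs =>
        (hg _ _ (half_lt_infDist_of_lipschitzOnWith hχ hy hfar htT (by linarith [hs.1]) hs)).trans
          (sub_cmin_le_excessLagrangian y s)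
  linarith

end Minimizer

theorem trajectories_near_argmin_general {n : ℕ} (F : En n → Pn n → ℝ)
    (M : ℝ) (hM : ∀ (x : En n) (μ : Pn n), |F x μ| ≤ M)
    (hFx : ∀ μ : Pn n, Continuous fun x => F x μ)
    (hFm : ∀ x : En n, Continuous fun μ : Pn n => F x μ)
    (C_F : ℝ) (hCF : ∀ (z : En n) (μ : Pn n), F z μ - cmin F μ ≤ C_F)
    (𝒜 : Set (En n)) (hA_ne : 𝒜.Nonempty)
    (hA_min : ∀ a ∈ 𝒜, ∀ μ : Pn n, F a μ = cmin F μ)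
    (γ : ℝ → ℝ) (hγ_pos : ∀ r : ℝ, 0 < r → 0 < γ r)
    (hγ : ∀ r : ℝ, 0 < r → ∀ (z : En n) (μ : Pn n),
      r < Metric.infDist z 𝒜 → γ r ≤ F z μ - cmin F μ)
    (χ' : ℝ) (hχ' : 0 < χ')
    (x : En n) :
    ∀ r : ℝ, 0 < r → ∃ T₀ : ℝ, 0 < T₀ ∧
      ∀ T : ℝ, T₀ ≤ T → ∀ m : ℝ → Pn n, ContinuousOn m (Set.Icc 0 T) →
        ∀ ystar : ℝ → En n,
          LipschitzOnWith (Real.toNNReal χ') ystar (Set.Icc 0 T) → ystar 0 = x →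
          (∀ y : ℝ → En n, Adm 0 T x y → action F m 0 T ystar ≤ action F m 0 T y) →
          ∀ t ∈ Set.Icc (T₀ - r / (2 * χ')) T, Metric.infDist (ystar t) 𝒜 ≤ r := by
  intro r hr
  obtain ⟨a₀, ha₀, hxa₀⟩ : ∃ a₀ ∈ 𝒜, dist x a₀ < infDist x 𝒜 + 1 :=
    (infDist_lt_iff hA_ne).1 (by linarith)
  have hc := continuous_cmin_of_forall_eq (hFm a₀) (hA_min a₀ ha₀)
  have hCF0 := nonneg_of_forall_sub_cmin_le (hA_min a₀ ha₀) (hCF a₀)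
  have hγ2 : 0 < γ (r / 2) := hγ_pos _ (by positivity)
  set ℓ := r / (2 * χ')
  have hℓ : 0 < ℓ := by positivity
  -- a walk at speed 2 for time `δ` costs less than staying `r/2`-far from `𝒜` for time `ℓ`
  obtain ⟨δ', hδ'0, hδ'g⟩ := exists_pos_mul_lt (mul_pos hγ2 hℓ) (2 + C_F)
  set δ := min δ' ℓ
  have hδ0 : 0 < δ := lt_min hδ'0 hℓ
  have hδg : (2 + C_F) * δ < γ (r / 2) * ℓ :=
    (mul_le_mul_of_nonneg_left (min_le_left _ _) (by linarith)).trans_lt hδ'g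
  -- at speed `χ'`, time `τ₀` suffices to walk from `x` into `𝒜`, at excess cost at most `E₀`
  set τ₀ := (infDist x 𝒜 + 1) / χ'
  have hτ₀ : 0 < τ₀ := div_pos (by linarith [infDist_nonneg (x := x) (s := 𝒜)]) hχ'
  set E₀ := (χ' ^ 2 / 2 + C_F) * τ₀
  have hE₀ : 0 ≤ E₀ / γ δ := div_nonneg (by positivity) (hγ_pos δ hδ0).le
  refine ⟨τ₀ + 2 * ℓ + E₀ / γ δ, by positivity, fun T hT m hm y hy hy0 hmin t ht => ?_⟩
  have hbudget : ∫ s in 0..T, excessLagrangian F m y s ≤ E₀ := by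
    have hK : ‖a₀ - y 0‖ ≤ (Real.toNNReal χ' : ℝ) * τ₀ := by
      rw [hy0, ← dist_eq_norm', Real.coe_toNNReal _ hχ'.le, mul_div_cancel₀ _ hχ'.ne']
      exact hxa₀.le
    simpa [Real.coe_toNNReal _ hχ'.le] using integral_excessLagrangian_le_of_isMinimizer hM hFx
      hFm hc hCF le_rfl hτ₀ (by linarith) hm hy hy0 hmin (hA_min a₀ ha₀) hK
  obtain ⟨σ, hσ, hσδ⟩ := exists_infDist_le_of_integral_excessLagrangian_le hM (hγ δ hδ0)
    (hγ_pos δ hδ0) (intervalIntegrable_excessLagrangian hM hFx hFm hc (by linarith) hm hy)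
    hbudget (t := t - ℓ) (by linarith [ht.1]) (by linarith [ht.1]) (by linarith [ht.2])
  exact infDist_le_of_infDist_le_before hM hFx hFm hc hCF hA_ne hA_min hr hχ'
    (hγ _ (by positivity)) hδ0 (min_le_right _ _) hδg hm hy hy0 hmin hσ.1 hσ.2 ht.2 hσδ

/-- **Optimal trajectories eventually stay near the common minimizing set.**
Under the hypotheses of the occupational estimate, assume additionally that
`F(z,μ) − c(μ) ≥ γ(r)` whenever `dist(z,𝒜) > r` (with `γ(r) > 0`), and that the minimizers are
Lipschitz with a common constant `χ' > 0`. Then for every `r > 0` there exists `T₀ > 0`,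
depending only on the fixed data, such that for every horizon `T ≥ T₀`, every narrowly
continuous flow `m` and every χ'-Lipschitz action minimizer `y*` from `x`,
`dist(y*(t), 𝒜) ≤ r` for all `t ∈ [T₀ − r/(2χ'), T]`. -/
theorem trajectories_near_argmin {n : ℕ} (F : En n → Pn n → ℝ)
    (M : ℝ) (hM : ∀ (x : En n) (μ : Pn n), |F x μ| ≤ M)
    (hFx : ∀ μ : Pn n, Continuous fun x => F x μ)
    (hFm : ∀ x : En n, Continuous fun μ : Pn n => F x μ)
    (C_F : ℝ) (hCF : ∀ (z : En n) (μ : Pn n), F z μ - cmin F μ ≤ C_F)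
    (𝒜 : Set (En n)) (hA_ne : 𝒜.Nonempty) (hA_closed : IsClosed 𝒜)
    (hA_min : ∀ a ∈ 𝒜, ∀ μ : Pn n, F a μ = cmin F μ)
    (γ : ℝ → ℝ) (hγ_pos : ∀ r : ℝ, 0 < r → 0 < γ r)
    (hγ : ∀ r : ℝ, 0 < r → ∀ (z : En n) (μ : Pn n),
      r < Metric.infDist z 𝒜 → γ r ≤ F z μ - cmin F μ)
    (χ' : ℝ) (hχ' : 0 < χ')
    (x : En n) :
    ∀ r : ℝ, 0 < r → ∃ T₀ : ℝ, 0 < T₀ ∧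
      ∀ T : ℝ, T₀ ≤ T → ∀ m : ℝ → Pn n, ContinuousOn m (Set.Icc 0 T) →
        ∀ ystar : ℝ → En n,
          LipschitzOnWith (Real.toNNReal χ') ystar (Set.Icc 0 T) → ystar 0 = x →
          (∀ y : ℝ → En n, Adm 0 T x y → action F m 0 T ystar ≤ action F m 0 T y) →
          ∀ t ∈ Set.Icc (T₀ - r / (2 * χ')) T, Metric.infDist (ystar t) 𝒜 ≤ r :=
  trajectories_near_argmin_general F M hM hFx hFm C_F hCF 𝒜 hA_ne hA_min γ hγ_pos hγ χ' hχ' x
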